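/- arXiv:1907.03652 — 2 statements merged into one kernel-verified Lean document; each statement's English description precedes it below -/
import Mathlib

section
/- For every θ ∈ (0, π/2), (2π − 4θ)·cos²θ + 6·sin θ·cos θ − 3π + 6θ < 0. Consequently the function θ ↦ tan θ − (π/2 − θ)·tan²θ has negative second derivative, i.e., is strictly concave, on (0, π/2). -/
/-!
Substituting `t = π - 2θ` turns the inequality into `3 sin t < 2t + t cos t` on `(0, π)`. The
difference of the two sides vanishes at `t = 0` and has derivative
`2 - 2 cos t - t sin t = 4 sin u (sin u - u cos u)` with `u = t / 2`, which is positive because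
`u < tan u`.

Writing `T = tan θ`, so that `T' = 1 + T²`, the second derivative of
`tan θ - (π/2 - θ) tan² θ` is `(1 + T²) (6T - (π - 2θ)(1 + 3T²)) = (1 + T²)² N(θ)`, where `N(θ)`
is the left-hand side of the inequality; hence it is negative.
-/

open Real

theorem Real.hasDerivAt_tan_eq_one_add_tan_sq {x : ℝ} (h : cos x ≠ 0) :
    HasDerivAt tan (1 + tan x ^ 2) x := by
  convert hasDerivAt_tan h using 1
  rw [one_div, ← inv_one_add_tan_sq h, inv_inv]

lemma two_sub_two_mul_cos_sub_mul_sin_pos {x : ℝ} (hx₀ : 0 < x) (hxπ : x < π) :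
    0 < 2 - 2 * cos x - x * sin x := by
  set u := x / 2
  have hx : x = 2 * u := by ring
  have hsin : 0 < sin u := sin_pos_of_pos_of_lt_pi (by positivity) (by linarith)
  have hcos : 0 < cos u := cos_pos_of_mem_Ioo ⟨by linarith, by linarith⟩
  have hu_lt : u * cos u < sin u := by
    have := lt_tan (x := u) (by positivity) (by linarith)
    rwa [tan_eq_sin_div_cos, lt_div_iff₀ hcos] at this
  have key : 2 - 2 * cos x - x * sin x = 4 * sin u * (sin u - u * cos u) := by
    rw [hx, cos_two_mul, sin_two_mul]
    linear_combination -4 * sin_sq_add_cos_sq u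
  rw [key]
  exact mul_pos (by positivity) (sub_pos.mpr hu_lt)

lemma three_mul_sin_lt_two_mul_add_mul_cos {x : ℝ} (hx₀ : 0 < x) (hxπ : x < π) :
    3 * sin x < 2 * x + x * cos x := by
  have hmono : StrictMonoOn (fun t => 2 * t + t * cos t - 3 * sin t) (Set.Icc 0 π) := by
    refine strictMonoOn_of_hasDerivWithinAt_pos (convex_Icc 0 π) (by fun_prop)
      (f' := fun t => 2 - 2 * cos t - t * sin t) (fun t _ => ?_) fun t ht => ?_
    · exact ((((hasDerivAt_id' t).const_mul 2).add ((hasDerivAt_id' t).mul (hasDerivAt_cos t))).sub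
        ((hasDerivAt_sin t).const_mul 3)).congr_deriv (by ring) |>.hasDerivWithinAt
    · rw [interior_Icc] at ht
      exact two_sub_two_mul_cos_sub_mul_sin_pos ht.1 ht.2
  have := hmono ⟨le_rfl, pi_pos.le⟩ ⟨hx₀.le, hxπ.le⟩ hx₀
  simp only [mul_zero, cos_zero, sin_zero, sub_zero] at this
  linarith

lemma two_mul_pi_sub_four_mul_mul_cos_sq_add_lt_zero {θ : ℝ} (hθ₀ : 0 < θ) (hθ : θ < π / 2) :
    (2 * π - 4 * θ) * cos θ ^ 2 + 6 * sin θ * cos θ - 3 * π + 6 * θ < 0 := by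
  have key := three_mul_sin_lt_two_mul_add_mul_cos (x := π - 2 * θ) (by linarith) (by linarith)
  rw [sin_pi_sub, cos_pi_sub, sin_two_mul, cos_two_mul] at key
  linarith

section TanSubMulTanSq

variable (a : ℝ)

lemma hasDerivAt_tan_sub_mul_tan_sq {θ : ℝ} (h : cos θ ≠ 0) :
    HasDerivAt (fun θ => tan θ - (a - θ) * tan θ ^ 2)
      ((1 + tan θ ^ 2) * (1 - 2 * (a - θ) * tan θ) + tan θ ^ 2) θ := by
  have htan := hasDerivAt_tan_eq_one_add_tan_sq h
  exact (htan.fun_sub (((hasDerivAt_id' θ).const_sub a).fun_mul (htan.fun_pow 2))).congr_deriv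
    (by push_cast; ring)

lemma hasDerivAt_deriv_tan_sub_mul_tan_sq {θ : ℝ} (h : cos θ ≠ 0) :
    HasDerivAt (fun θ => (1 + tan θ ^ 2) * (1 - 2 * (a - θ) * tan θ) + tan θ ^ 2)
      ((1 + tan θ ^ 2) * (6 * tan θ - 2 * (a - θ) * (1 + 3 * tan θ ^ 2))) θ := by
  have htan := hasDerivAt_tan_eq_one_add_tan_sq h
  have hsq := htan.fun_pow 2
  exact ((((hasDerivAt_const θ 1).fun_add hsq).fun_mul ((hasDerivAt_const θ 1).fun_sub
    ((((hasDerivAt_id' θ).const_sub a).const_mul 2).fun_mul htan))).fun_add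
    hsq).congr_deriv (by push_cast; ring)

lemma deriv2_tan_sub_mul_tan_sq {θ : ℝ} (h : cos θ ≠ 0) :
    deriv^[2] (fun θ => tan θ - (a - θ) * tan θ ^ 2) θ =
      (1 + tan θ ^ 2) * (6 * tan θ - 2 * (a - θ) * (1 + 3 * tan θ ^ 2)) := by
  have hderiv : deriv (fun θ => tan θ - (a - θ) * tan θ ^ 2) =ᶠ[nhds θ]
      fun θ => (1 + tan θ ^ 2) * (1 - 2 * (a - θ) * tan θ) + tan θ ^ 2 := by
    filter_upwards [continuous_cos.continuousAt.eventually_ne h] with x hx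
    exact (hasDerivAt_tan_sub_mul_tan_sq a hx).deriv
  rw [Function.iterate_succ_apply', Function.iterate_one, hderiv.deriv_eq,
    (hasDerivAt_deriv_tan_sub_mul_tan_sq a h).deriv]

lemma six_mul_tan_sub_eq_one_add_tan_sq_mul {θ : ℝ} (h : cos θ ≠ 0) :
    6 * tan θ - 2 * (a - θ) * (1 + 3 * tan θ ^ 2) = (1 + tan θ ^ 2) *
      ((4 * a - 4 * θ) * cos θ ^ 2 + 6 * sin θ * cos θ - 6 * a + 6 * θ) := by
  linear_combination (6 * cos θ * (1 + tan θ ^ 2)) * tan_mul_cos h -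
    (4 * (a - θ) + 6 * tan θ) * one_add_tan_sq_mul_cos_sq_eq_one h

end TanSubMulTanSq

theorem second_derivative_negative :
    (∀ θ ∈ Set.Ioo (0 : ℝ) (π / 2),
        (2 * π - 4 * θ) * cos θ ^ 2 + 6 * sin θ * cos θ - 3 * π + 6 * θ < 0) ∧
      StrictConcaveOn ℝ (Set.Ioo (0 : ℝ) (π / 2))
        (fun θ : ℝ => tan θ - (π / 2 - θ) * tan θ ^ 2) := by
  have hcos : ∀ θ ∈ Set.Ioo (0 : ℝ) (π / 2), cos θ ≠ 0 := fun θ hθ =>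
    (cos_pos_of_mem_Ioo ⟨by linarith [pi_pos, hθ.1], hθ.2⟩).ne'
  refine ⟨fun θ hθ => two_mul_pi_sub_four_mul_mul_cos_sq_add_lt_zero hθ.1 hθ.2,
    strictConcaveOn_of_deriv2_neg (convex_Ioo _ _) (fun θ hθ => ?_) fun θ hθ => ?_⟩
  · exact (hasDerivAt_tan_sub_mul_tan_sq _ (hcos θ hθ)).continuousAt.continuousWithinAt
  · rw [interior_Ioo] at hθ
    rw [deriv2_tan_sub_mul_tan_sq _ (hcos θ hθ),
      six_mul_tan_sub_eq_one_add_tan_sq_mul _ (hcos θ hθ), ← mul_assoc]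
    refine mul_neg_of_pos_of_neg (by positivity) ?_
    linarith [two_mul_pi_sub_four_mul_mul_cos_sq_add_lt_zero hθ.1 hθ.2]
end

section
/- The function s tends to 1 as q tends to 0 from the right: lim_{q→0⁺} s(q) = 1. -/
/-!
After dividing numerator and denominator by `2q`, the only indeterminate part left is
`arcsin (q / (1 + q)) / q`, a difference quotient at `0` of a function with derivative `1` there;
everything else is continuous at `0`.
-/

open Real

/-- Florian's bound. -/
noncomputable def florianS (q : ℝ) : ℝ :=
  (π * q ^ 2 + 2 * (1 - q ^ 2) * arcsin (q / (1 + q))) / (2 * q * Real.sqrt (1 + 2 * q))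

open Filter Topology

lemma hasDerivAt_arcsin_div_one_add :
    HasDerivAt (fun q : ℝ => arcsin (q / (1 + q))) 1 0 := by
  have hdiv : HasDerivAt (fun q : ℝ => q / (1 + q)) 1 0 := by
    simpa using
      (hasDerivAt_id' (0 : ℝ)).fun_div ((hasDerivAt_id' (0 : ℝ)).const_add 1) (by norm_num)
  have harcsin : HasDerivAt arcsin 1 (0 / (1 + 0)) := by
    simpa using Real.hasDerivAt_arcsin (x := 0) (by norm_num) (by norm_num)
  simpa [Function.comp_def] using harcsin.comp 0 hdiv

lemma tendsto_arcsin_div_one_add_div_self :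
    Tendsto (fun q : ℝ => arcsin (q / (1 + q)) / q) (𝓝[≠] 0) (𝓝 1) := by
  simpa [slope_fun_def_field] using hasDerivAt_iff_tendsto_slope.mp hasDerivAt_arcsin_div_one_add

lemma florianS_eq {q : ℝ} (hq : q ≠ 0) :
    florianS q = (π * q / 2 + (1 - q ^ 2) * (arcsin (q / (1 + q)) / q)) / √(1 + 2 * q) := by
  rw [florianS, mul_comm 2 q, mul_assoc, ← div_div, ← div_div]
  congr 1
  field_simp

theorem florian_tendsto_one :
    Filter.Tendsto florianS (nhdsWithin 0 (Set.Ioi (0 : ℝ))) (nhds 1) := by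
  have hslope : Tendsto (fun q : ℝ => arcsin (q / (1 + q)) / q) (𝓝[>] 0) (𝓝 1) :=
    tendsto_arcsin_div_one_add_div_self.mono_left <| nhdsWithin_mono _ fun q hq => ne_of_gt hq
  have hcont {f : ℝ → ℝ} (hf : Continuous f) : Tendsto f (𝓝[>] 0) (𝓝 (f 0)) :=
    tendsto_nhdsWithin_of_tendsto_nhds (hf.tendsto 0)
  have hlim := ((hcont (f := fun q => π * q / 2) (by fun_prop)).add
    ((hcont (f := fun q => 1 - q ^ 2) (by fun_prop)).mul hslope)).div
    (hcont (f := fun q => √(1 + 2 * q)) (by fun_prop)) (by norm_num)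
  norm_num at hlim
  refine hlim.congr' ?_
  filter_upwards [self_mem_nhdsWithin] with q hq
  exact (florianS_eq (ne_of_gt hq)).symm
end
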